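/- Assume q is 1-periodic (q(x+1) = q(x) for all x) and let λ ∈ ℂ satisfy c'(1,λ) = 0, s(1,λ) = 0, c(1/2,λ) = s'(1/2,λ), c(3/2,λ) = s'(3/2,λ), and s'(1/2,λ) ≠ 0. Then s'(1,λ) = c(1,λ), and consequently c(1,λ) = 1 or c(1,λ) = −1 and Δ(λ)² = 4. -/

import Mathlib

/-!
The Wronskian of two solutions is constant, so `c s' - c' s ≡ 1`; at `x = 1` the hypotheses
`c'(1) = 0 = s(1)` reduce this to `c(1) s'(1) = 1`. Since `q` is 1-periodic, `x ↦ c(x + 1)` and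
`x ↦ s(x + 1)` are again solutions; expanding them in the fundamental system `c, s` gives
`c(x + 1) = c(1) c(x)` and `s'(x + 1) = s'(1) s'(x)`. At `x = 1/2` the relations
`c = s'` at `1/2` and `3/2` give `c(1) s'(1/2) = s'(1) s'(1/2)`, and cancelling `s'(1/2) ≠ 0`
yields `s'(1) = c(1)`, whence `c(1)² = 1`.
-/

/-- `IsSol q μ y yd` says that `y : ℝ → ℂ` is a (twice continuously differentiable)
solution of `−y'' + q·y = μ·y` on all of `ℝ`, with first derivative `yd`. -/
def IsSol (q : ℝ → ℂ) (μ : ℂ) (y yd : ℝ → ℂ) : Prop :=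
  (∀ x : ℝ, HasDerivAt y (yd x) x) ∧
  (∀ x : ℝ, HasDerivAt yd (q x * y x - μ * y x) x)

namespace IsSol

variable {q : ℝ → ℂ} {μ : ℂ}

theorem wronskian_eq {y yd z zd : ℝ → ℂ} (hy : IsSol q μ y yd) (hz : IsSol q μ z zd)
    (a b : ℝ) : y a * zd a - yd a * z a = y b * zd b - yd b * z b := by
  have hderiv : ∀ x, HasDerivAt (fun x => y x * zd x - yd x * z x) 0 x := fun x =>
    (((hy.1 x).mul (hz.2 x)).sub ((hy.2 x).mul (hz.1 x))).congr_deriv (by ring)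
  exact is_const_of_deriv_eq_zero (fun x => (hderiv x).differentiableAt)
    (fun x => (hderiv x).deriv) a b

theorem comp_add_period {y yd : ℝ → ℂ} {T : ℝ} (h : IsSol q μ y yd)
    (hq : ∀ x, q (x + T) = q x) : IsSol q μ (fun x => y (x + T)) (fun x => yd (x + T)) :=
  ⟨fun x => (h.1 (x + T)).comp_add_const x T,
    fun x => by simpa only [hq x] using (h.2 (x + T)).comp_add_const x T⟩

section Fundamental

variable {C Cd S Sd : ℝ → ℂ} (hC : IsSol q μ C Cd) (hS : IsSol q μ S Sd)
  (hC0 : C 0 = 1) (hCd0 : Cd 0 = 0) (hS0 : S 0 = 0) (hSd0 : Sd 0 = 1)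
include hC hS hC0 hCd0 hS0 hSd0

theorem wronskian_eq_one (x : ℝ) : C x * Sd x - Cd x * S x = 1 := by
  simpa [hC0, hCd0, hS0, hSd0] using hC.wronskian_eq hS x 0

theorem eq_fundamental_combination {y yd : ℝ → ℂ} (hy : IsSol q μ y yd) (x : ℝ) :
    y x = y 0 * C x + yd 0 * S x ∧ yd x = y 0 * Cd x + yd 0 * Sd x := by
  have hW := wronskian_eq_one hC hS hC0 hCd0 hS0 hSd0 x
  have hWC : y x * Cd x - yd x * C x = -yd 0 := by
    simpa [hC0, hCd0] using hy.wronskian_eq hC x 0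
  have hWS : y x * Sd x - yd x * S x = y 0 := by
    simpa [hS0, hSd0] using hy.wronskian_eq hS x 0
  constructor
  · linear_combination C x * hWS - S x * hWC - y x * hW
  · linear_combination Cd x * hWS - Sd x * hWC - yd x * hW

end Fundamental

end IsSol

theorem stmt17_general (q : ℝ → ℂ)
    (c s cd sd : ℂ → ℝ → ℂ)
    (hc : ∀ l : ℂ, IsSol q (l ^ 2) (c l) (cd l))
    (hs : ∀ l : ℂ, IsSol q (l ^ 2) (s l) (sd l))
    (hc0 : ∀ l : ℂ, c l 0 = 1) (hcd0 : ∀ l : ℂ, cd l 0 = 0)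
    (hs0 : ∀ l : ℂ, s l 0 = 0) (hsd0 : ∀ l : ℂ, sd l 0 = 1)
    (hper : ∀ x : ℝ, q (x + 1) = q x) (l : ℂ)
    (h1 : cd l 1 = 0) (h2 : s l 1 = 0)
    (h3 : c l (1/2) = sd l (1/2))
    (h4 : c l (3/2) = sd l (3/2))
    (h5 : sd l (1/2) ≠ 0) :
    sd l 1 = c l 1 ∧ (c l 1 = 1 ∨ c l 1 = -1) ∧ (c l 1 + sd l 1) ^ 2 = 4 := by
  have expand := fun {y yd : ℝ → ℂ} (hy : IsSol q (l ^ 2) y yd) =>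
    (hc l).eq_fundamental_combination (hs l) (hc0 l) (hcd0 l) (hs0 l) (hsd0 l) hy
  have hc_shift (x : ℝ) : c l (x + 1) = c l 1 * c l x := by
    simpa [h1, mul_comm] using (expand ((hc l).comp_add_period hper) x).1
  have hsd_shift (x : ℝ) : sd l (x + 1) = sd l 1 * sd l x := by
    simpa [h2, mul_comm] using (expand ((hs l).comp_add_period hper) x).2
  have hsd1 : sd l 1 = c l 1 := by
    refine (mul_right_cancel₀ h5 ?_).symm
    calc c l 1 * sd l (1/2) = c l (1/2 + 1) := by rw [hc_shift, h3]
      _ = sd l (1/2 + 1) := by norm_num [h4]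
      _ = sd l 1 * sd l (1/2) := hsd_shift _
  have hdet : c l 1 * sd l 1 = 1 := by
    simpa [h1, h2] using (hc l).wronskian_eq_one (hs l) (hc0 l) (hcd0 l) (hs0 l) (hsd0 l) 1
  have hsq : c l 1 * c l 1 = 1 := by rw [← hdet, hsd1]
  exact ⟨hsd1, mul_self_eq_one_iff.mp hsq, by rw [hsd1]; linear_combination 4 * hsq⟩

/-- Case s'(1/2,λ) ≠ 0 in the sufficiency proof, under the symmetry relations. -/
theorem stmt17 (q : ℝ → ℂ) (hq : Continuous q)
    (c s cd sd : ℂ → ℝ → ℂ)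
    (hc : ∀ l : ℂ, IsSol q (l ^ 2) (c l) (cd l))
    (hs : ∀ l : ℂ, IsSol q (l ^ 2) (s l) (sd l))
    (hc0 : ∀ l : ℂ, c l 0 = 1) (hcd0 : ∀ l : ℂ, cd l 0 = 0)
    (hs0 : ∀ l : ℂ, s l 0 = 0) (hsd0 : ∀ l : ℂ, sd l 0 = 1)
    (hper : ∀ x : ℝ, q (x + 1) = q x) (l : ℂ)
    (h1 : cd l 1 = 0) (h2 : s l 1 = 0)
    (h3 : c l (1/2) = sd l (1/2))
    (h4 : c l (3/2) = sd l (3/2))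
    (h5 : sd l (1/2) ≠ 0) :
    sd l 1 = c l 1 ∧ (c l 1 = 1 ∨ c l 1 = -1) ∧ (c l 1 + sd l 1) ^ 2 = 4 :=
  stmt17_general q c s cd sd hc hs hc0 hcd0 hs0 hsd0 hper l h1 h2 h3 h4 h5
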